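/- For every 0 < ε ≤ 1 and every solution (u, m) of Problem 1, the following integral identity holds: ∫₀¹ [(1+ε)·H(u') + m·(u'·H'(u') − H(u'))] dx + ∫₀¹ m^{α+1} dx + ε ∫₀¹ (u² + m² + (u')² + (m')²) dx = −ε ∫₀¹ u dx + ∫₀¹ (m − 1 − ε)·V dx + (1+ε) ∫₀¹ m^α dx + ε(1+ε) ∫₀¹ m dx. -/

import Mathlib

/-!
Multiplying the first equation by `1 + ε - m` and the second by `u` and adding, every term
containing `u''`, `m''` or `(H'(u') m)'` combines into the derivative of the flux
`(1 + ε - m) (u' - ε m') + u (m' + H'(u') m + ε u')`, and what is left is the difference of the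
two integrands of the identity. The flux is a periodic `C¹` function, so its derivative
integrates to zero over a period.
-/

open Set intervalIntegral

noncomputable section

/-- `f : ℝ → ℝ` is ½-Hölder continuous: there is `K ≥ 0` with
`|f x - f y| ≤ K * |x - y| ^ (1/2)` for all `x y`. -/
def IsHolderHalf (f : ℝ → ℝ) : Prop :=
  ∃ K : ℝ, 0 ≤ K ∧ ∀ x y : ℝ, |f x - f y| ≤ K * |x - y| ^ ((1 : ℝ) / 2)

/-- `f` is a 1-periodic function of class `C²` (a `C²` function on the torus `𝕋`). -/
def MemC2T (f : ℝ → ℝ) : Prop :=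
  Function.Periodic f 1 ∧ ContDiff ℝ 2 f

/-- `f ∈ C^{2,1/2}(𝕋)`: 1-periodic, of class `C²`, with ½-Hölder continuous
second derivative. -/
def MemC2HalfT (f : ℝ → ℝ) : Prop :=
  MemC2T f ∧ IsHolderHalf (deriv (deriv f))

/-- `(u, m)` is a solution of Problem 1 with Hamiltonian `H`, potential `V`,
exponent `α` and parameter `ε`: `u, m` are 1-periodic `C²` functions, `m > 0`
everywhere, and the system
`u - u'' + H(u') + V = m^α + ε (m - m'')`,
`m - m'' - (H'(u') m)' = 1 - ε (u - u'')`
holds pointwise. -/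
def SolvesMFG (H V : ℝ → ℝ) (α ε : ℝ) (u m : ℝ → ℝ) : Prop :=
  MemC2T u ∧ MemC2T m ∧ (∀ x, 0 < m x) ∧
  (∀ x : ℝ, u x - deriv (deriv u) x + H (deriv u x) + V x
      = m x ^ α + ε * (m x - deriv (deriv m) x)) ∧
  (∀ x : ℝ, m x - deriv (deriv m) x
      - deriv (fun y => deriv H (deriv u y) * m y) x
      = 1 - ε * (u x - deriv (deriv u) x))

theorem Function.Periodic.deriv {𝕜 F : Type*} [NontriviallyNormedField 𝕜] [NormedAddCommGroup F]
    [NormedSpace 𝕜 F] {f : 𝕜 → F} {c : 𝕜} (h : Function.Periodic f c) :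
    Function.Periodic (deriv f) c := fun x => by
  rw [← deriv_comp_add_const, funext h]

theorem intervalIntegral_deriv_eq_zero_of_periodic {E : Type*} [NormedAddCommGroup E]
    [NormedSpace ℝ E] [CompleteSpace E] {f : ℝ → E} {c : ℝ} (h : Function.Periodic f c)
    (hf : ContDiff ℝ 1 f) (a : ℝ) : ∫ x in a..a + c, deriv f x = 0 := by
  rw [integral_deriv_eq_sub (fun x _ => hf.differentiable one_ne_zero x)
    ((hf.continuous_deriv le_rfl).intervalIntegrable _ _), h a, sub_self]

def energyFlux (H : ℝ → ℝ) (ε : ℝ) (u m : ℝ → ℝ) (x : ℝ) : ℝ :=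
  (1 + ε - m x) * (deriv u x - ε * deriv m x)
    + u x * (deriv m x + deriv H (deriv u x) * m x + ε * deriv u x)

section

variable {H : ℝ → ℝ} {ε : ℝ} {u m : ℝ → ℝ}

theorem contDiff_energyFlux (hH : ContDiff ℝ 2 H) (hu : ContDiff ℝ 2 u) (hm : ContDiff ℝ 2 m) :
    ContDiff ℝ 1 (energyFlux H ε u m) := by
  have hH' : ContDiff ℝ 1 (deriv H) := hH.deriv'
  have hu' : ContDiff ℝ 1 (deriv u) := hu.deriv'
  have hm' : ContDiff ℝ 1 (deriv m) := hm.deriv'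
  have hu1 : ContDiff ℝ 1 u := hu.of_le one_le_two
  have hm1 : ContDiff ℝ 1 m := hm.of_le one_le_two
  unfold energyFlux
  fun_prop

theorem periodic_energyFlux {c : ℝ} (hu : Function.Periodic u c) (hm : Function.Periodic m c) :
    Function.Periodic (energyFlux H ε u m) c := fun x => by
  simp only [energyFlux, hu x, hm x, hu.deriv x, hm.deriv x]

theorem hasDerivAt_energyFlux {x : ℝ} (hu : DifferentiableAt ℝ u x)
    (hu' : DifferentiableAt ℝ (deriv u) x) (hm : DifferentiableAt ℝ m x)
    (hm' : DifferentiableAt ℝ (deriv m) x)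
    (hW : DifferentiableAt ℝ (fun y => deriv H (deriv u y) * m y) x) :
    HasDerivAt (energyFlux H ε u m)
      (-deriv m x * (deriv u x - ε * deriv m x)
        + (1 + ε - m x) * (deriv (deriv u) x - ε * deriv (deriv m) x)
        + deriv u x * (deriv m x + deriv H (deriv u x) * m x + ε * deriv u x)
        + u x * (deriv (deriv m) x + deriv (fun y => deriv H (deriv u y) * m y) x
          + ε * deriv (deriv u) x)) x := by
  have hflux := (((hasDerivAt_const x (1 + ε)).sub hm.hasDerivAt).mul
      (hu'.hasDerivAt.sub (hm'.hasDerivAt.const_mul ε))).add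
    (hu.hasDerivAt.mul ((hm'.hasDerivAt.add hW.hasDerivAt).add (hu'.hasDerivAt.const_mul ε)))
  refine hflux.congr_deriv ?_
  simp only [Pi.add_apply, Pi.sub_apply]
  ring

theorem SolvesMFG.deriv_energyFlux {V : ℝ → ℝ} {α : ℝ} (hsol : SolvesMFG H V α ε u m)
    (hH : ContDiff ℝ 2 H) (x : ℝ) :
    deriv (energyFlux H ε u m) x =
      (1 + ε) * H (deriv u x) + m x * (deriv u x * deriv H (deriv u x) - H (deriv u x))
        + m x ^ (α + 1) + ε * (u x ^ 2 + m x ^ 2 + deriv u x ^ 2 + deriv m x ^ 2)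
      - (-(ε * u x) + (m x - 1 - ε) * V x + (1 + ε) * m x ^ α + ε * (1 + ε) * m x) := by
  obtain ⟨⟨-, hu⟩, ⟨-, hm⟩, hm_pos, hHJ, hFP⟩ := hsol
  have hW : Differentiable ℝ (fun y => deriv H (deriv u y) * m y) :=
    (hH.differentiable_deriv_two.comp hu.differentiable_deriv_two).mul
      (hm.differentiable two_ne_zero)
  rw [(hasDerivAt_energyFlux (hu.differentiable two_ne_zero x) (hu.differentiable_deriv_two x)
    (hm.differentiable two_ne_zero x) (hm.differentiable_deriv_two x) (hW x)).deriv,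
    Real.rpow_add_one (hm_pos x).ne']
  linear_combination -((1 + ε - m x) * hHJ x + u x * hFP x)

end

theorem energy_identity_general
    (α : ℝ)
    (H V : ℝ → ℝ) (hH : ContDiff ℝ 2 H)
    (hVcont : Continuous V) :
    ∀ ε : ℝ, 0 < ε → ε ≤ 1 → ∀ u m : ℝ → ℝ, SolvesMFG H V α ε u m →
      (∫ x in (0:ℝ)..1, ((1 + ε) * H (deriv u x)
          + m x * (deriv u x * deriv H (deriv u x) - H (deriv u x))))
        + (∫ x in (0:ℝ)..1, m x ^ (α + 1))
        + ε * (∫ x in (0:ℝ)..1,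
            ((u x) ^ 2 + (m x) ^ 2 + (deriv u x) ^ 2 + (deriv m x) ^ 2))
      = -(ε * ∫ x in (0:ℝ)..1, u x)
        + (∫ x in (0:ℝ)..1, (m x - 1 - ε) * V x)
        + (1 + ε) * (∫ x in (0:ℝ)..1, m x ^ α)
        + ε * (1 + ε) * (∫ x in (0:ℝ)..1, m x) := by
  intro ε _ _ u m hsol
  have hflux_deriv := hsol.deriv_energyFlux hH
  obtain ⟨⟨hu_per, hu⟩, ⟨hm_per, hm⟩, hm_pos, -, -⟩ := hsol
  have hzero : ∫ x in (0:ℝ)..0 + 1, deriv (energyFlux H ε u m) x = 0 :=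
    intervalIntegral_deriv_eq_zero_of_periodic (periodic_energyFlux hu_per hm_per)
      (contDiff_energyFlux hH hu hm) 0
  rw [zero_add, integral_congr fun x _ => hflux_deriv x] at hzero
  -- continuity of the integrands, for `fun_prop` in the side conditions of linearity
  have := hu.continuous
  have := hu.continuous_deriv one_le_two
  have := hm.continuous
  have := hm.continuous_deriv one_le_two
  have := hH.continuous
  have := hH.continuous_deriv one_le_two
  have : Continuous fun x => m x ^ α := hm.continuous.rpow_const fun x => .inl (hm_pos x).ne'
  have : Continuous fun x => m x ^ (α + 1) :=
    hm.continuous.rpow_const fun x => .inl (hm_pos x).ne'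
  simp (disch := (apply Continuous.intervalIntegrable; fun_prop)) only
    [integral_add, integral_sub, integral_const_mul, integral_neg] at hzero ⊢
  linarith

/-- For every `0 < ε ≤ 1` and every solution `(u, m)` of
Problem 1, the integral identity
`∫₀¹ [(1+ε) H(u') + m (u' H'(u') - H(u'))] + ∫₀¹ m^{α+1}
  + ε ∫₀¹ (u² + m² + u'² + m'²)
  = -ε ∫₀¹ u + ∫₀¹ (m - 1 - ε) V + (1+ε) ∫₀¹ m^α + ε(1+ε) ∫₀¹ m` holds. -/
theorem energy_identity
    (α : ℝ) (hα : 0 < α)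
    (H V : ℝ → ℝ) (hH : ContDiff ℝ 2 H)
    (hVcont : Continuous V) (hVper : Function.Periodic V 1) :
    ∀ ε : ℝ, 0 < ε → ε ≤ 1 → ∀ u m : ℝ → ℝ, SolvesMFG H V α ε u m →
      (∫ x in (0:ℝ)..1, ((1 + ε) * H (deriv u x)
          + m x * (deriv u x * deriv H (deriv u x) - H (deriv u x))))
        + (∫ x in (0:ℝ)..1, m x ^ (α + 1))
        + ε * (∫ x in (0:ℝ)..1,
            ((u x) ^ 2 + (m x) ^ 2 + (deriv u x) ^ 2 + (deriv m x) ^ 2))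
      = -(ε * ∫ x in (0:ℝ)..1, u x)
        + (∫ x in (0:ℝ)..1, (m x - 1 - ε) * V x)
        + (1 + ε) * (∫ x in (0:ℝ)..1, m x ^ α)
        + ε * (1 + ε) * (∫ x in (0:ℝ)..1, m x) :=
  energy_identity_general α H V hH hVcont
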